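/- arXiv:2605.12876 — 5 statements merged into one kernel-verified Lean document; each statement's English description precedes it below -/
import Mathlib

section
/- Let X ≥ 0 be an integrable real random variable with cumulative distribution function F_X(t) = P(X ≤ t) and (left-continuous) quantile function Q_X(p) = inf{t ∈ ℝ : F_X(t) ≥ p} for p ∈ (0,1). Fix p ∈ (0,1) and set q := Q_X(p). If F_X is continuous at q, then E[X · 1{X ≤ q}] = ∫₀ᵖ Q_X(u) du. -/
/-!
The quantile function `Q` of `μ` is the lower adjoint of the cdf `F` on `(0, 1)`:
`Q u ≤ t ↔ u ≤ F t`. Hence `Q` pushes the uniform distribution on `(0, 1)` forward to `μ`, and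
`E[X · 1{X ≤ q}] = ∫₀¹ Q u · 1{Q u ≤ q} du`. The same adjunction turns `Q u ≤ q` into
`u ≤ F q`, and continuity of `F` at `q = Q p` gives `F q = p`.
-/

open MeasureTheory Set Filter Topology ProbabilityTheory

namespace ProbabilityTheory

/-- Only meaningful for `0 < u < 1`: otherwise the set is unbounded below or empty and `sInf`
returns the junk value `0`. -/
noncomputable def quantile (μ : Measure ℝ) (u : ℝ) : ℝ := sInf {t | u ≤ cdf μ t}

variable {μ : Measure ℝ} {u t : ℝ}

lemma bddBelow_setOf_le_cdf (hu : 0 < u) : BddBelow {t | u ≤ cdf μ t} := by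
  obtain ⟨t₀, ht₀⟩ := eventually_atBot.1 ((tendsto_cdf_atBot (μ := μ)).eventually (gt_mem_nhds hu))
  refine ⟨t₀, fun t ht => le_of_not_gt fun hlt => ?_⟩
  exact (ht₀ t hlt.le).not_ge ht

lemma nonempty_setOf_le_cdf (hu : u < 1) : {t | u ≤ cdf μ t}.Nonempty :=
  ((tendsto_cdf_atTop (μ := μ)).eventually_const_le hu).exists

lemma le_cdf_quantile (hu₁ : u < 1) : u ≤ cdf μ (quantile μ u) := by
  have hright : Tendsto (cdf μ) (𝓝[>] (quantile μ u)) (𝓝 (cdf μ (quantile μ u))) :=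
    ((cdf μ).right_continuous _).tendsto.mono_left (nhdsWithin_mono _ Ioi_subset_Ici_self)
  refine ge_of_tendsto hright (eventually_nhdsWithin_of_forall fun s hs => ?_)
  obtain ⟨t, ht, hts⟩ := exists_lt_of_csInf_lt (nonempty_setOf_le_cdf hu₁) hs
  exact ht.trans (monotone_cdf μ hts.le)

lemma quantile_le_iff (hu₀ : 0 < u) (hu₁ : u < 1) : quantile μ u ≤ t ↔ u ≤ cdf μ t :=
  ⟨fun h => (le_cdf_quantile hu₁).trans (monotone_cdf μ h),
    fun h => csInf_le (bddBelow_setOf_le_cdf hu₀) h⟩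

lemma monotoneOn_quantile : MonotoneOn (quantile μ) (Ioo 0 1) := fun _ hu _ hv huv =>
  (quantile_le_iff hu.1 hu.2).2 <| huv.trans <| (quantile_le_iff hv.1 hv.2).1 le_rfl

lemma cdf_quantile_of_continuousAt (hu₀ : 0 < u) (hu₁ : u < 1)
    (hcont : ContinuousAt (cdf μ) (quantile μ u)) : cdf μ (quantile μ u) = u := by
  refine le_antisymm ?_ (le_cdf_quantile hu₁)
  refine le_of_tendsto (hcont.tendsto.mono_left (nhdsWithin_le_nhds (s := Iio (quantile μ u))))
    (eventually_nhdsWithin_of_forall fun t ht => ?_)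
  exact (not_le.1 <| (quantile_le_iff hu₀ hu₁).not.1 <| not_le.2 ht).le

lemma volume_Iic_inter_Ioo_zero_one {a : ℝ} (ha : a ≤ 1) :
    volume (Iic a ∩ Ioo 0 1) = ENNReal.ofReal a := by
  have hIoc : Iic a ∩ Ioc 0 1 = Ioc 0 a := by
    ext u; simp only [mem_inter_iff, mem_Iic, mem_Ioc]; grind
  rw [measure_congr (ae_eq_set_inter (ae_eq_refl (Iic a)) (Ioo_ae_eq_Ioc (μ := volume))), hIoc,
    Real.volume_Ioc, sub_zero]

lemma map_quantile_volume_Ioo [IsProbabilityMeasure μ] :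
    (volume.restrict (Ioo (0 : ℝ) 1)).map (quantile μ) = μ := by
  have hmeas : AEMeasurable (quantile μ) (volume.restrict (Ioo (0 : ℝ) 1)) :=
    aemeasurable_restrict_of_monotoneOn measurableSet_Ioo monotoneOn_quantile
  refine (Measure.ext_of_Iic μ _ fun t => ?_).symm
  have hpre : quantile μ ⁻¹' Iic t ∩ Ioo 0 1 = Iic (cdf μ t) ∩ Ioo 0 1 := by
    ext u
    simp only [mem_inter_iff, mem_preimage, mem_Iic]
    exact ⟨fun ⟨h, hu⟩ => ⟨(quantile_le_iff hu.1 hu.2).1 h, hu⟩,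
      fun ⟨h, hu⟩ => ⟨(quantile_le_iff hu.1 hu.2).2 h, hu⟩⟩
  rw [Measure.map_apply_of_aemeasurable hmeas measurableSet_Iic,
    Measure.restrict_apply' measurableSet_Ioo, hpre,
    volume_Iic_inter_Ioo_zero_one (cdf_le_one μ t), ofReal_cdf]

lemma setIntegral_Iic_quantile [IsProbabilityMeasure μ] {p : ℝ} (hp₀ : 0 < p) (hp₁ : p < 1)
    (hcont : ContinuousAt (cdf μ) (quantile μ p)) :
    ∫ x in Iic (quantile μ p), x ∂μ = ∫ u in (0)..p, quantile μ u := by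
  have hindicator : EqOn ((Iic (quantile μ p)).indicator id ∘ quantile μ)
      ((Iic p).indicator (quantile μ)) (Ioo 0 1) := fun u hu => by
    simp only [Function.comp_apply, indicator, mem_Iic, id,
      quantile_le_iff hu.1 hu.2, cdf_quantile_of_continuousAt hp₀ hp₁ hcont]
  have hIoc : Ioo 0 1 ∩ Iic p = Ioc 0 p := by
    ext u; simp only [mem_inter_iff, mem_Ioo, mem_Iic, mem_Ioc]; grind
  calc ∫ x in Iic (quantile μ p), x ∂μ
      = ∫ x, (Iic (quantile μ p)).indicator id x
          ∂(volume.restrict (Ioo (0 : ℝ) 1)).map (quantile μ) := by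
        rw [map_quantile_volume_Ioo, integral_indicator measurableSet_Iic]; rfl
    _ = ∫ u in Ioo 0 1, (Iic p).indicator (quantile μ) u := by
        rw [integral_map (aemeasurable_restrict_of_monotoneOn measurableSet_Ioo
          monotoneOn_quantile) (measurable_id.indicator measurableSet_Iic).aestronglyMeasurable]
        exact setIntegral_congr_fun measurableSet_Ioo hindicator
    _ = ∫ u in (0)..p, quantile μ u := by
        rw [setIntegral_indicator measurableSet_Iic, hIoc, intervalIntegral.integral_of_le hp₀.le]

end ProbabilityTheory

theorem quantile_lower_partial_expectation_general
    {Ω : Type*} [MeasurableSpace Ω] (P : Measure Ω) [IsProbabilityMeasure P]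
    (X : Ω → ℝ) (hXint : Integrable X P)
    (F : ℝ → ℝ) (hF : F = fun t => (P {ω | X ω ≤ t}).toReal)
    (Q : ℝ → ℝ) (hQ : Q = fun p => sInf {t : ℝ | p ≤ F t})
    (p : ℝ) (hp : p ∈ Set.Ioo (0 : ℝ) 1)
    (hcont : ContinuousAt F (Q p)) :
    ∫ ω, X ω * Set.indicator {ω | X ω ≤ Q p} (fun _ => (1 : ℝ)) ω ∂P
      = ∫ u in (0 : ℝ)..p, Q u := by
  have hX : AEMeasurable X P := hXint.aemeasurable
  have : IsProbabilityMeasure (P.map X) := Measure.isProbabilityMeasure_map hX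
  obtain rfl : F = cdf (P.map X) := by
    funext t
    rw [hF, cdf_eq_real, measureReal_def, Measure.map_apply_of_aemeasurable hX measurableSet_Iic]
    rfl
  obtain rfl : Q = quantile (P.map X) := hQ
  calc ∫ ω, X ω * {ω | X ω ≤ quantile (P.map X) p}.indicator (fun _ => (1 : ℝ)) ω ∂P
      = ∫ ω, (Iic (quantile (P.map X) p)).indicator id (X ω) ∂P := by
        congr 1 with ω
        by_cases h : X ω ≤ quantile (P.map X) p <;> simp [indicator, h]
    _ = ∫ x in Iic (quantile (P.map X) p), x ∂(P.map X) := by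
        rw [← integral_indicator measurableSet_Iic]
        exact (integral_map hX
          (measurable_id.indicator measurableSet_Iic).aestronglyMeasurable).symm
    _ = ∫ u in (0 : ℝ)..p, quantile (P.map X) u := setIntegral_Iic_quantile hp.1 hp.2 hcont

/-- **Quantile (Lorenz) identity for lower partial expectations.**
For a nonnegative integrable random variable `X` with CDF `F` and left-continuous
quantile function `Q p = inf {t | F t ≥ p}`, if `F` is continuous at `q = Q p`
for `p ∈ (0,1)`, then `E[X·1{X ≤ q}] = ∫₀ᵖ Q(u) du`. -/
theorem quantile_lower_partial_expectation
    {Ω : Type*} [MeasurableSpace Ω] (P : Measure Ω) [IsProbabilityMeasure P]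
    (X : Ω → ℝ) (hXnn : ∀ ω, 0 ≤ X ω) (hXint : Integrable X P)
    (F : ℝ → ℝ) (hF : F = fun t => (P {ω | X ω ≤ t}).toReal)
    (Q : ℝ → ℝ) (hQ : Q = fun p => sInf {t : ℝ | p ≤ F t})
    (p : ℝ) (hp : p ∈ Set.Ioo (0 : ℝ) 1)
    (hcont : ContinuousAt F (Q p)) :
    ∫ ω, X ω * Set.indicator {ω | X ω ≤ Q p} (fun _ => (1 : ℝ)) ω ∂P
      = ∫ u in (0 : ℝ)..p, Q u :=
  quantile_lower_partial_expectation_general P X hXint F hF Q hQ p hp hcont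
end

section
/- Let S be a countable set, p₁ a probability mass function on S, and γ₁ : S → (0,∞). Let D ≥ 1, σ > 0, x₂ ∈ ℝ^D, and Δ ∈ ℝ^D with r := ‖Δ‖₂ > 0. Let w be the product of the discrete measure with mass function p₁ on S and the D-fold product of one-dimensional Gaussian measures N((x₂)ᵢ, σ²) on ℝ^D. Define γ₂(z₂) = exp(σ⁻²·Δᵀ(z₂ − x₂) − r²/(2σ²)) and γ(z₁,z₂) = γ₁(z₁)·γ₂(z₂). Then for every t > 0, w({(z₁,z₂) : γ(z₁,z₂) ≤ t}) = Σ_{z₁∈S} p₁(z₁) · Φ((r²/2 + σ²(log t − log γ₁(z₁)))/(σr)), where Φ is the standard normal cumulative distribution function. -/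
open MeasureTheory ProbabilityTheory

/-- The standard normal cumulative distribution function `Φ`. -/
noncomputable def stdNormalCDF (t : ℝ) : ℝ :=
  ((gaussianReal 0 1) (Set.Iic t)).toReal

/-- The discrete measure on a countable set with mass function `p`. -/
noncomputable def discreteMeasure {S : Type*} [MeasurableSpace S] (p : S → ℝ) :
    Measure S :=
  Measure.sum (fun z => ENNReal.ofReal (p z) • Measure.dirac z)

open Real Set

open scoped ENNReal NNReal

/-! Slicing the product measure along the discrete coordinate reduces the claim to one Gaussian
computation per `z₁ ∈ S`. For fixed `z₁`, taking logarithms turns `{γ ≤ t}` into the half-space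
`Δᵀ(z₂ - x₂) ≤ r²/2 + σ²(log t - log γ₁ z₁)`, and under `N(x₂, σ²I)` the linear form
`Δᵀ(z₂ - x₂)` is `N(0, σ²r²)`, as one reads off from characteristic functions. -/

lemma toReal_discreteMeasure_prod_apply {S β : Type*} [MeasurableSpace S] [MeasurableSpace β]
    {p : S → ℝ} (hp : ∀ z, 0 ≤ p z) (ν : Measure β) [IsFiniteMeasure ν]
    {A : Set (S × β)} (hA : MeasurableSet A) :
    ((discreteMeasure p).prod ν A).toReal = ∑' z, p z * (ν (Prod.mk z ⁻¹' A)).toReal := by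
  rw [Measure.prod_apply hA, discreteMeasure, lintegral_sum_measure]
  simp only [lintegral_smul_measure, lintegral_dirac' _ (measurable_measure_prodMk_left hA),
    smul_eq_mul]
  rw [ENNReal.tsum_toReal_eq fun z => ENNReal.mul_ne_top ENNReal.ofReal_ne_top (measure_ne_top _ _)]
  simp only [ENNReal.toReal_mul, ENNReal.toReal_ofReal (hp _)]

lemma map_pi_gaussianReal_sum_mul {ι : Type*} [Fintype ι] (μ : ι → ℝ) (v : ι → ℝ≥0)
    (c : ι → ℝ) :
    (Measure.pi fun i => gaussianReal (μ i) (v i)).map (fun x => ∑ i, c i * x i)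
      = gaussianReal (∑ i, c i * μ i) (∑ i, ⟨c i ^ 2, sq_nonneg _⟩ * v i) := by
  have hscale : (Measure.pi fun i => gaussianReal (μ i) (v i)).map (fun x i => c i * x i)
      = Measure.pi fun i => gaussianReal (c i * μ i) (⟨c i ^ 2, sq_nonneg _⟩ * v i) := by
    rw [Measure.pi_map_pi (fun i => by fun_prop)]
    simp_rw [gaussianReal_map_const_mul]
    rfl
  have hcomp : (fun x : ι → ℝ => ∑ i, c i * x i)
      = (fun y : ι → ℝ => ∑ i, y i) ∘ (fun x i => c i * x i) := rfl
  rw [hcomp, ← Measure.map_map (by fun_prop) (by fun_prop), hscale]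
  refine Measure.ext_of_charFun ?_
  rw [charFun_map_sum_pi_eq_prod]
  ext t
  simp only [Finset.prod_apply, charFun_gaussianReal, ← Complex.exp_sum]
  push_cast
  congr 1
  simp only [Finset.sum_sub_distrib, Finset.mul_sum, Finset.sum_mul, Finset.sum_div]

lemma toReal_gaussianReal_Iic {m s : ℝ} (hs : 0 < s) (a : ℝ) :
    (gaussianReal m ⟨s ^ 2, sq_nonneg s⟩ (Iic a)).toReal = stdNormalCDF ((a - m) / s) := by
  have hstd : gaussianReal m ⟨s ^ 2, sq_nonneg s⟩
      = ((gaussianReal 0 1).map (s * ·)).map (· + m) := by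
    rw [gaussianReal_map_const_mul, gaussianReal_map_add_const, mul_zero, zero_add, mul_one]
    rfl
  have hpre : (s * ·) ⁻¹' ((· + m) ⁻¹' Iic a) = Iic ((a - m) / s) := by
    ext x
    simp only [mem_preimage, mem_Iic, le_div_iff₀ hs, le_sub_iff_add_le, mul_comm x]
  rw [hstd, Measure.map_apply (by fun_prop) measurableSet_Iic,
    Measure.map_apply (by fun_prop) (measurableSet_Iic.preimage (by fun_prop)), hpre, stdNormalCDF]

lemma toReal_pi_gaussianReal_halfSpace {ι : Type*} [Fintype ι] (μ : ι → ℝ) {σ : ℝ}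
    (hσ : 0 < σ) {c : ι → ℝ} (hc : 0 < √(∑ i, c i ^ 2)) (a : ℝ) :
    ((Measure.pi fun i => gaussianReal (μ i) ⟨σ ^ 2, sq_nonneg σ⟩)
        {x | ∑ i, c i * (x i - μ i) ≤ a}).toReal
      = stdNormalCDF (a / (σ * √(∑ i, c i ^ 2))) := by
  have hset : {x : ι → ℝ | ∑ i, c i * (x i - μ i) ≤ a}
      = (fun x => ∑ i, c i * x i) ⁻¹' Iic (a + ∑ i, c i * μ i) := by
    ext x
    simp only [mem_ofPred_eq, mem_preimage, mem_Iic, mul_sub, Finset.sum_sub_distrib,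
      sub_le_iff_le_add]
  have hvar : ∑ i, (⟨c i ^ 2, sq_nonneg _⟩ * ⟨σ ^ 2, sq_nonneg σ⟩ : ℝ≥0)
      = ⟨(σ * √(∑ i, c i ^ 2)) ^ 2, sq_nonneg _⟩ := by
    ext
    rw [NNReal.coe_sum]
    change ∑ i, c i ^ 2 * σ ^ 2 = (σ * √(∑ i, c i ^ 2)) ^ 2
    rw [mul_pow, sq_sqrt (Finset.sum_nonneg fun i _ => sq_nonneg (c i)), ← Finset.sum_mul, mul_comm]
  rw [hset, ← Measure.map_apply (by fun_prop) measurableSet_Iic,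
    map_pi_gaussianReal_sum_mul μ (fun _ => ⟨σ ^ 2, sq_nonneg σ⟩), hvar,
    toReal_gaussianReal_Iic (by positivity), add_sub_cancel_right]

lemma mul_exp_sub_div_le_iff {g t σ r L : ℝ} (hg : 0 < g) (ht : 0 < t) (hσ : 0 < σ) :
    g * exp (L / σ ^ 2 - r ^ 2 / (2 * σ ^ 2)) ≤ t ↔ L ≤ r ^ 2 / 2 + σ ^ 2 * (log t - log g) := by
  have hexp : L / σ ^ 2 - r ^ 2 / (2 * σ ^ 2) = (L - r ^ 2 / 2) / σ ^ 2 := by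
    field_simp
  rw [← le_div_iff₀' hg, ← le_log_iff_exp_le (div_pos ht hg), log_div ht.ne' hg.ne', hexp,
    div_le_iff₀ (by positivity)]
  constructor <;> intro h <;> linarith

theorem hybrid_clean_capacity_general
    {S : Type*} [Countable S] [MeasurableSpace S] [MeasurableSingletonClass S]
    (p₁ : S → ℝ) (hp₁nn : ∀ z, 0 ≤ p₁ z)
    (γ₁ : S → ℝ) (hγ₁ : ∀ z, 0 < γ₁ z)
    (D : ℕ) (σ : ℝ) (hσ : 0 < σ)
    (x₂ Δ : Fin D → ℝ)
    (r : ℝ) (hr : r = Real.sqrt (∑ i, Δ i ^ 2)) (hr0 : 0 < r)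
    (w : Measure (S × (Fin D → ℝ)))
    (hw : w = (discreteMeasure p₁).prod
      (Measure.pi (fun i => gaussianReal (x₂ i) ⟨σ ^ 2, sq_nonneg σ⟩)))
    (t : ℝ) (ht : 0 < t) :
    (w {q : S × (Fin D → ℝ) |
        γ₁ q.1 * Real.exp ((∑ i, Δ i * (q.2 i - x₂ i)) / σ ^ 2 - r ^ 2 / (2 * σ ^ 2))
          ≤ t}).toReal
      = ∑' z₁, p₁ z₁ *
          stdNormalCDF ((r ^ 2 / 2 + σ ^ 2 * (Real.log t - Real.log (γ₁ z₁))) / (σ * r)) := by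
  subst hw
  have hγ₁meas : Measurable γ₁ := measurable_of_countable γ₁
  -- instance search does not see through the anonymous constructor for the variance
  have := fun i => instIsProbabilityMeasureGaussianReal (x₂ i) ⟨σ ^ 2, sq_nonneg σ⟩
  rw [toReal_discreteMeasure_prod_apply hp₁nn _ (measurableSet_le (by fun_prop) measurable_const)]
  refine tsum_congr fun z => ?_
  have hslice : Prod.mk z ⁻¹' {q : S × (Fin D → ℝ) |
        γ₁ q.1 * exp ((∑ i, Δ i * (q.2 i - x₂ i)) / σ ^ 2 - r ^ 2 / (2 * σ ^ 2)) ≤ t}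
      = {x | ∑ i, Δ i * (x i - x₂ i) ≤ r ^ 2 / 2 + σ ^ 2 * (log t - log (γ₁ z))} := by
    ext x
    exact mul_exp_sub_div_le_iff (hγ₁ z) ht hσ
  subst hr
  rw [hslice, toReal_pi_gaussianReal_halfSpace x₂ hσ hr0]

/-- **Clean-side capacity identity of hybrid randomized smoothing.**
Under the clean smoothing distribution `w = p₁ ⊗ N(x₂, σ²I_D)`, the joint likelihood
ratio `γ(z₁,z₂) = γ₁(z₁)·exp(σ⁻²Δᵀ(z₂−x₂) − r²/(2σ²))` satisfies
`w({γ ≤ t}) = Σ_{z₁} p₁(z₁)·Φ((r²/2 + σ²(log t − log γ₁(z₁)))/(σr))`. -/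
theorem hybrid_clean_capacity
    {S : Type*} [Countable S] [MeasurableSpace S] [MeasurableSingletonClass S]
    (p₁ : S → ℝ) (hp₁nn : ∀ z, 0 ≤ p₁ z) (hp₁sum : ∑' z, p₁ z = 1)
    (γ₁ : S → ℝ) (hγ₁ : ∀ z, 0 < γ₁ z)
    (D : ℕ) (hD : 1 ≤ D) (σ : ℝ) (hσ : 0 < σ)
    (x₂ Δ : Fin D → ℝ)
    (r : ℝ) (hr : r = Real.sqrt (∑ i, Δ i ^ 2)) (hr0 : 0 < r)
    (w : Measure (S × (Fin D → ℝ)))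
    (hw : w = (discreteMeasure p₁).prod
      (Measure.pi (fun i => gaussianReal (x₂ i) ⟨σ ^ 2, sq_nonneg σ⟩)))
    (t : ℝ) (ht : 0 < t) :
    (w {q : S × (Fin D → ℝ) |
        γ₁ q.1 * Real.exp ((∑ i, Δ i * (q.2 i - x₂ i)) / σ ^ 2 - r ^ 2 / (2 * σ ^ 2))
          ≤ t}).toReal
      = ∑' z₁, p₁ z₁ *
          stdNormalCDF ((r ^ 2 / 2 + σ ^ 2 * (Real.log t - Real.log (γ₁ z₁))) / (σ * r)) :=
  hybrid_clean_capacity_general p₁ hp₁nn γ₁ hγ₁ D σ hσ x₂ Δ r hr hr0 w hw t ht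
end

section
/- Let S be a countable set, p₁ a probability mass function on S, and γ₁ : S → (0,∞). Fix σ > 0 and r > 0, and define for t > 0, F(t) = Σ_{z₁∈S} p₁(z₁) · Φ((r²/2 + σ²(log t − log γ₁(z₁)))/(σr)), where Φ is the standard normal cumulative distribution function. Then F is continuous and strictly increasing on (0,∞), F(t) → 0 as t → 0⁺ and F(t) → 1 as t → ∞; consequently, for every p_A ∈ (0,1) there exists a unique t* > 0 with F(t*) = p_A. -/
/-!
Since `(r²/2 + σ²(log t − log γ₁ z))/(σr) = (σ/r)·log t + β z` with
`β z = r/(2σ) − (σ/r)·log γ₁ z`, we have `F = G ∘ log` for the mixture of shifted standard normal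
CDFs `G s = Σ_z p₁ z · Φ((σ/r)·s + β z)`. Each shift is continuous, strictly increasing, and
tends to `0` and `1` at `∓∞`, like `Φ`; the weights `p₁` dominate the series, so continuity and the
limits pass to `G` (Weierstrass M-test, Tannery), and strict monotonicity passes through any one
positive weight. As `log` is an increasing continuous bijection `(0, ∞) → ℝ`, `F` inherits
everything; the threshold comes from the intermediate value theorem and is unique by strict
monotonicity.
-/

open MeasureTheory ProbabilityTheory

open Filter Set Topology

lemma stdNormalCDF_eq_cdf (t : ℝ) : stdNormalCDF t = cdf (gaussianReal 0 1) t :=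
  (cdf_eq_real _ t).symm

lemma norm_stdNormalCDF_le_one (t : ℝ) : ‖stdNormalCDF t‖ ≤ 1 := by
  rw [stdNormalCDF_eq_cdf, Real.norm_of_nonneg (cdf_nonneg _ t)]
  exact cdf_le_one _ t

lemma tendsto_stdNormalCDF_atBot : Tendsto stdNormalCDF atBot (𝓝 0) := by
  rw [funext stdNormalCDF_eq_cdf]
  exact tendsto_cdf_atBot _

lemma tendsto_stdNormalCDF_atTop : Tendsto stdNormalCDF atTop (𝓝 1) := by
  rw [funext stdNormalCDF_eq_cdf]
  exact tendsto_cdf_atTop _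

lemma stdNormalCDF_sub_stdNormalCDF (s t : ℝ) :
    stdNormalCDF t - stdNormalCDF s = ∫ x in s..t, gaussianPDFReal 0 1 x := by
  have hΦ (u : ℝ) : stdNormalCDF u = ∫ x in Iic u, gaussianPDFReal 0 1 x := by
    rw [stdNormalCDF, gaussianReal_apply_eq_integral 0 one_ne_zero,
      ENNReal.toReal_ofReal (setIntegral_nonneg measurableSet_Iic
        fun x _ => gaussianPDFReal_nonneg 0 1 x)]
  have hint (u : ℝ) := (integrable_gaussianPDFReal 0 1).integrableOn (s := Iic u)
  rw [hΦ, hΦ, intervalIntegral.integral_Iic_sub_Iic (hint s) (hint t)]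

lemma continuous_stdNormalCDF : Continuous stdNormalCDF := by
  have hΦ : stdNormalCDF = fun t => (∫ x in (0 : ℝ)..t, gaussianPDFReal 0 1 x) + stdNormalCDF 0 :=
    funext fun t => by rw [← stdNormalCDF_sub_stdNormalCDF, sub_add_cancel]
  rw [hΦ]
  exact ((integrable_gaussianPDFReal 0 1).continuous_primitive 0).add continuous_const

lemma strictMono_stdNormalCDF : StrictMono stdNormalCDF := fun s t hst => by
  rw [← sub_pos, stdNormalCDF_sub_stdNormalCDF]
  exact intervalIntegral.intervalIntegral_pos_of_pos_on
    (integrable_gaussianPDFReal 0 1).intervalIntegrable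
    (fun x _ => gaussianPDFReal_pos 0 1 x one_ne_zero) hst

section Mixture

variable {ι α : Type*} {p : ι → ℝ} {f : ι → α → ℝ}

lemma summable_of_tsum_eq_one (h : ∑' i, p i = 1) : Summable p := by
  by_contra hp
  simp [tsum_eq_zero_of_not_summable hp] at h

lemma exists_pos_of_tsum_eq_one (hp0 : 0 ≤ p) (h : ∑' i, p i = 1) : ∃ i, 0 < p i := by
  by_contra! hneg
  have hp : p = 0 := funext fun i => le_antisymm (hneg i) (hp0 i)
  simp [hp] at h

lemma norm_mul_le_of_norm_le_one (hp0 : 0 ≤ p) (hf : ∀ i x, ‖f i x‖ ≤ 1) (i : ι) (x : α) :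
    ‖p i * f i x‖ ≤ p i := by
  rw [norm_mul, Real.norm_of_nonneg (hp0 i)]
  exact mul_le_of_le_one_right (hp0 i) (hf i x)

lemma continuous_tsum_mul [TopologicalSpace α] (hp0 : 0 ≤ p) (hp : Summable p)
    (hf : ∀ i x, ‖f i x‖ ≤ 1) (hcont : ∀ i, Continuous (f i)) :
    Continuous fun x => ∑' i, p i * f i x :=
  continuous_tsum (fun i => continuous_const.mul (hcont i)) hp (norm_mul_le_of_norm_le_one hp0 hf)

lemma tendsto_tsum_mul {l : Filter α} {c : ι → ℝ} (hp0 : 0 ≤ p) (hp : Summable p)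
    (hf : ∀ i x, ‖f i x‖ ≤ 1) (hlim : ∀ i, Tendsto (f i) l (𝓝 (c i))) :
    Tendsto (fun x => ∑' i, p i * f i x) l (𝓝 (∑' i, p i * c i)) :=
  tendsto_tsum_of_dominated_convergence hp (fun i => (hlim i).const_mul (p i))
    (Eventually.of_forall fun x i => norm_mul_le_of_norm_le_one hp0 hf i x)

lemma strictMono_tsum_mul [PartialOrder α] {i₀ : ι} (hp0 : 0 ≤ p) (hp : Summable p)
    (hf : ∀ i x, ‖f i x‖ ≤ 1) (hmono : ∀ i, StrictMono (f i)) (hi₀ : 0 < p i₀) :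
    StrictMono fun x => ∑' i, p i * f i x := fun x y hxy => by
  have hsum (w : α) : Summable fun i => p i * f i w :=
    hp.of_norm_bounded fun i => norm_mul_le_of_norm_le_one hp0 hf i w
  exact (hsum x).tsum_lt_tsum (i := i₀)
    (fun i => mul_le_mul_of_nonneg_left ((hmono i).monotone hxy.le) (hp0 i))
    (mul_lt_mul_of_pos_left (hmono i₀ hxy) hi₀) (hsum y)

end Mixture

noncomputable def normalCDFMixture {ι : Type*} (p : ι → ℝ) (a : ℝ) (b : ι → ℝ) (s : ℝ) : ℝ :=
  ∑' i, p i * stdNormalCDF (a * s + b i)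

section NormalCDFMixture

variable {ι : Type*} {p : ι → ℝ} {a : ℝ} {b : ι → ℝ}

lemma continuous_normalCDFMixture (hp0 : 0 ≤ p) (hp : Summable p) :
    Continuous (normalCDFMixture p a b) :=
  continuous_tsum_mul hp0 hp (fun _ _ => norm_stdNormalCDF_le_one _)
    fun _ => continuous_stdNormalCDF.comp (by fun_prop)

lemma strictMono_normalCDFMixture (hp0 : 0 ≤ p) (hp : Summable p) {i₀ : ι} (hi₀ : 0 < p i₀)
    (ha : 0 < a) : StrictMono (normalCDFMixture p a b) :=
  strictMono_tsum_mul hp0 hp (fun _ _ => norm_stdNormalCDF_le_one _)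
    (fun i => strictMono_stdNormalCDF.comp fun _ _ h => by gcongr) hi₀

lemma tendsto_normalCDFMixture_atBot (hp0 : 0 ≤ p) (hp : Summable p) (ha : 0 < a) :
    Tendsto (normalCDFMixture p a b) atBot (𝓝 0) := by
  rw [show (0 : ℝ) = ∑' i, p i * 0 by simp]
  exact tendsto_tsum_mul hp0 hp (fun _ _ => norm_stdNormalCDF_le_one _)
    fun i => tendsto_stdNormalCDF_atBot.comp <|
      tendsto_atBot_add_const_right _ (b i) (tendsto_id.const_mul_atBot ha)

lemma tendsto_normalCDFMixture_atTop (hp0 : 0 ≤ p) (hp : Summable p) (ha : 0 < a) :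
    Tendsto (normalCDFMixture p a b) atTop (𝓝 (∑' i, p i)) := by
  rw [show ∑' i, p i = ∑' i, p i * 1 by simp]
  exact tendsto_tsum_mul hp0 hp (fun _ _ => norm_stdNormalCDF_le_one _)
    fun i => tendsto_stdNormalCDF_atTop.comp <|
      tendsto_atTop_add_const_right _ (b i) (tendsto_id.const_mul_atTop ha)

end NormalCDFMixture

lemma existsUnique_eq_of_strictMonoOn_Ioi {F : ℝ → ℝ} {c y₀ y₁ y : ℝ}
    (hcont : ContinuousOn F (Ioi c)) (hmono : StrictMonoOn F (Ioi c))
    (hlim₀ : Tendsto F (𝓝[>] c) (𝓝 y₀)) (hlim₁ : Tendsto F atTop (𝓝 y₁)) (hy : y ∈ Ioo y₀ y₁) :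
    ∃! t, c < t ∧ F t = y := by
  obtain ⟨u, hFu, hu⟩ :=
    ((hlim₀.eventually (eventually_lt_nhds hy.1)).and self_mem_nhdsWithin).exists
  obtain ⟨v, hFv, huv⟩ :=
    ((hlim₁.eventually (eventually_gt_nhds hy.2)).and (eventually_gt_atTop u)).exists
  have hIcc : Icc u v ⊆ Ioi c := fun x hx => lt_of_lt_of_le hu hx.1
  obtain ⟨t, ht, hFt⟩ := intermediate_value_Icc huv.le (hcont.mono hIcc) ⟨hFu.le, hFv.le⟩
  exact ⟨t, ⟨hIcc ht, hFt⟩, fun s ⟨hs, hFs⟩ => hmono.injOn hs (hIcc ht) (hFs.trans hFt.symm)⟩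

theorem hybrid_capacity_cdf_properties_general
    {S : Type*}
    (p₁ : S → ℝ) (hp₁nn : ∀ z, 0 ≤ p₁ z) (hp₁sum : ∑' z, p₁ z = 1)
    (γ₁ : S → ℝ)
    (σ r : ℝ) (hσ : 0 < σ) (hr : 0 < r)
    (F : ℝ → ℝ)
    (hF : F = fun t => ∑' z₁, p₁ z₁ *
      stdNormalCDF ((r ^ 2 / 2 + σ ^ 2 * (Real.log t - Real.log (γ₁ z₁))) / (σ * r))) :
    ContinuousOn F (Set.Ioi 0) ∧
      StrictMonoOn F (Set.Ioi 0) ∧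
      Filter.Tendsto F (nhdsWithin 0 (Set.Ioi 0)) (nhds 0) ∧
      Filter.Tendsto F Filter.atTop (nhds 1) ∧
      ∀ pA ∈ Set.Ioo (0 : ℝ) 1, ∃! t : ℝ, 0 < t ∧ F t = pA := by
  have hp0 : 0 ≤ p₁ := hp₁nn
  have hp := summable_of_tsum_eq_one hp₁sum
  obtain ⟨z₀, hz₀⟩ := exists_pos_of_tsum_eq_one hp0 hp₁sum
  have ha : 0 < σ / r := div_pos hσ hr
  set G := normalCDFMixture p₁ (σ / r) fun z => r / (2 * σ) - σ / r * Real.log (γ₁ z)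
  have hFG : F = G ∘ Real.log := by
    refine hF.trans (funext fun t => tsum_congr fun z => ?_)
    congr 2
    field_simp
    ring
  have hcont : ContinuousOn F (Ioi 0) := hFG ▸
    (continuous_normalCDFMixture hp0 hp).comp_continuousOn
      (Real.continuousOn_log.mono fun _ ht => ht.ne')
  have hmono : StrictMonoOn F (Ioi 0) :=
    hFG ▸ (strictMono_normalCDFMixture hp0 hp hz₀ ha).comp_strictMonoOn Real.strictMonoOn_log
  have hlim₀ : Tendsto F (𝓝[>] 0) (𝓝 0) :=
    hFG ▸ (tendsto_normalCDFMixture_atBot hp0 hp ha).comp Real.tendsto_log_nhdsGT_zero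
  have hlim₁ : Tendsto F atTop (𝓝 1) :=
    hFG ▸ hp₁sum ▸ (tendsto_normalCDFMixture_atTop hp0 hp ha).comp Real.tendsto_log_atTop
  exact ⟨hcont, hmono, hlim₀, hlim₁,
    fun pA hpA => existsUnique_eq_of_strictMonoOn_Ioi hcont hmono hlim₀ hlim₁ hpA⟩

/-- **Existence and uniqueness of the hybrid Neyman–Pearson threshold.**
The hybrid likelihood-ratio CDF
`F(t) = Σ_{z₁} p₁(z₁)·Φ((r²/2 + σ²(log t − log γ₁(z₁)))/(σr))`
is continuous and strictly increasing on `(0,∞)`, tends to `0` at `0⁺` and to `1` at `∞`;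
hence for every `p_A ∈ (0,1)` there is a unique `t* > 0` with `F(t*) = p_A`. -/
theorem hybrid_capacity_cdf_properties
    {S : Type*} [Countable S]
    (p₁ : S → ℝ) (hp₁nn : ∀ z, 0 ≤ p₁ z) (hp₁sum : ∑' z, p₁ z = 1)
    (γ₁ : S → ℝ) (hγ₁ : ∀ z, 0 < γ₁ z)
    (σ r : ℝ) (hσ : 0 < σ) (hr : 0 < r)
    (F : ℝ → ℝ)
    (hF : F = fun t => ∑' z₁, p₁ z₁ *
      stdNormalCDF ((r ^ 2 / 2 + σ ^ 2 * (Real.log t - Real.log (γ₁ z₁))) / (σ * r))) :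
    ContinuousOn F (Set.Ioi 0) ∧
      StrictMonoOn F (Set.Ioi 0) ∧
      Filter.Tendsto F (nhdsWithin 0 (Set.Ioi 0)) (nhds 0) ∧
      Filter.Tendsto F Filter.atTop (nhds 1) ∧
      ∀ pA ∈ Set.Ioo (0 : ℝ) 1, ∃! t : ℝ, 0 < t ∧ F t = pA :=
  hybrid_capacity_cdf_properties_general p₁ hp₁nn hp₁sum γ₁ σ r hσ hr F hF
end

section
/- Let S be a countable set, p₁ and q₁ probability mass functions on S with the same support, and γ₁ = q₁/p₁ > 0 on the support. Let D ≥ 1, σ > 0, x₂ ∈ ℝ^D, Δ ∈ ℝ^D with r := ‖Δ‖₂ > 0. Let w be the product of p₁ and the D-fold product of Gaussians N((x₂)ᵢ, σ²), and v the product of q₁ and the D-fold product of Gaussians N((x₂ + Δ)ᵢ, σ²). Define γ(z₁,z₂) = γ₁(z₁)·exp(σ⁻²·Δᵀ(z₂ − x₂) − r²/(2σ²)). Fix p_A ∈ (0,1), let t* > 0 be the unique solution of Σ_{z₁} p₁(z₁)·Φ((r²/2 + σ²(log t* − log γ₁(z₁)))/(σr)) = p_A, and set h*(z₁,z₂) =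 1{γ(z₁,z₂) ≤ t*}. Then ∫ h* dw = p_A and ∫ h* dv = Σ_{z₁} q₁(z₁)·Φ((r²/2 + σ²(log t* − log γ₁(z₁)))/(σr) − r/σ), where Φ is the standard normal CDF. -/
open MeasureTheory ProbabilityTheory

/-! On each atom `z₁` with `p₁ z₁ > 0` the likelihood ratio test `γ ≤ t*` is the half-space
`Δᵀz₂ ≤ c(z₁) := Δᵀx₂ + σ²(log t* - log γ₁ z₁) + r²/2`. Under `N(m, σ²I)` the statistic `Δᵀz₂`
is `N(Δᵀm, σ²r²)` (a sum of independent Gaussians), so the half-space has mass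
`Φ((c(z₁) - Δᵀm)/(σr))`.
Summing against `p₁` with `m = x₂`, resp. against `q₁` with `m = x₂ + Δ`, where `Δᵀm` grows by `r²`,
gives both identities. -/

open scoped NNReal

lemma map_pi_gaussianReal_finsetSum_mul {ι : Type*} [Fintype ι] (m c : ι → ℝ) (v : ι → ℝ≥0)
    (s : Finset ι) :
    (Measure.pi fun i => gaussianReal (m i) (v i)).map (fun z => ∑ i ∈ s, c i * z i)
      = gaussianReal (∑ i ∈ s, c i * m i) (∑ i ∈ s, (c i ^ 2).toNNReal * v i) := by
  classical
  induction s using Finset.induction_on with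
  | empty => simp [gaussianReal_zero_var]
  | insert a s ha ih =>
    have hind : IndepFun (∑ j ∈ s, fun z : ι → ℝ => c j * z j) (fun z => c a * z a)
        (Measure.pi fun i => gaussianReal (m i) (v i)) :=
      (iIndepFun_pi (X := fun i (x : ℝ) => c i * x) fun i => by fun_prop)
        |>.indepFun_finsetSum_of_notMem (fun i => by fun_prop) ha
    have hcoord : (Measure.pi fun i => gaussianReal (m i) (v i)).map (fun z => c a * z a)
        = gaussianReal (c a * m a) ((c a ^ 2).toNNReal * v a) := by
      rw [Real.toNNReal_of_nonneg (sq_nonneg _), ← gaussianReal_map_const_mul,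
        ← (measurePreserving_eval (fun i => gaussianReal (m i) (v i)) a).map_eq,
        Measure.map_map (by fun_prop) (by fun_prop)]
      rfl
    have hsum :=
      gaussianReal_add_gaussianReal_of_indepFun hind (by simpa [Finset.sum_fn] using ih) hcoord
    rw [Finset.sum_insert ha, Finset.sum_insert ha, add_comm (c a * m a), add_comm (_ * v a),
      ← hsum]
    congr 1
    ext z
    simp [Finset.sum_insert ha, add_comm]

lemma gaussianReal_Iic_toReal (μ : ℝ) {v : ℝ≥0} (hv : v ≠ 0) (t : ℝ) :
    (gaussianReal μ v (Set.Iic t)).toReal = stdNormalCDF ((t - μ) / √v) := by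
  have hsqrt : 0 < √(v : ℝ) := Real.sqrt_pos.mpr (NNReal.coe_pos.mpr (pos_iff_ne_zero.mpr hv))
  have hstd : gaussianReal μ v = ((gaussianReal 0 1).map (√(v : ℝ) * ·)).map (· + μ) := by
    rw [gaussianReal_map_const_mul, mul_zero, gaussianReal_map_add_const, zero_add]
    congr
    ext
    simp [Real.sq_sqrt v.coe_nonneg]
  have hpre : (fun x => √(v : ℝ) * x + μ) ⁻¹' Set.Iic t = Set.Iic ((t - μ) / √v) := by
    ext x
    simp only [Set.mem_preimage, Set.mem_Iic, le_div_iff₀ hsqrt]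
    constructor <;> intro <;> linarith
  rw [hstd, Measure.map_map (by fun_prop) (by fun_prop),
    Measure.map_apply (by fun_prop) measurableSet_Iic]
  exact congrArg (fun s => (gaussianReal 0 1 s).toReal) hpre

lemma pi_gaussianReal_sum_mul_le_toReal {ι : Type*} [Fintype ι] (m : ι → ℝ) {c : ι → ℝ}
    (hc : c ≠ 0) {v : ℝ≥0} (hv : v ≠ 0) (C : ℝ) :
    ((Measure.pi fun i => gaussianReal (m i) v) {z | ∑ i, c i * z i ≤ C}).toReal
      = stdNormalCDF ((C - ∑ i, c i * m i) / (√(∑ i, c i ^ 2) * √v)) := by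
  have hvar : ((∑ i, (c i ^ 2).toNNReal * v : ℝ≥0) : ℝ) = (∑ i, c i ^ 2) * v := by
    push_cast [Real.coe_toNNReal _ (sq_nonneg _)]
    exact (Finset.sum_mul ..).symm
  have hc_sq : 0 < ∑ i, c i ^ 2 := by
    obtain ⟨j, hj⟩ := Function.ne_iff.mp hc
    exact Finset.sum_pos' (fun i _ => sq_nonneg _) ⟨j, Finset.mem_univ j, sq_pos_of_ne_zero hj⟩
  have hvar_ne : (∑ i, (c i ^ 2).toNNReal * v : ℝ≥0) ≠ 0 := by
    rw [← NNReal.coe_ne_zero, hvar]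
    exact mul_ne_zero hc_sq.ne' (NNReal.coe_ne_zero.mpr hv)
  have hsum : Measurable fun z : ι → ℝ => ∑ i, c i * z i := by fun_prop
  rw [show {z : ι → ℝ | ∑ i, c i * z i ≤ C} = (fun z => ∑ i, c i * z i) ⁻¹' Set.Iic C from rfl,
    ← Measure.map_apply hsum measurableSet_Iic, map_pi_gaussianReal_finsetSum_mul,
    gaussianReal_Iic_toReal _ hvar_ne, hvar, Real.sqrt_mul hc_sq.le]

lemma threshold_test_iff {ι : Type*} [Fintype ι] (Δ x z : ι → ℝ) {σ γ t : ℝ} (r : ℝ)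
    (hσ : σ ≠ 0) (hγ : 0 < γ) (ht : 0 < t) :
    γ * Real.exp ((∑ i, Δ i * (z i - x i)) / σ ^ 2 - r ^ 2 / (2 * σ ^ 2)) ≤ t ↔
      ∑ i, Δ i * z i ≤ ∑ i, Δ i * x i + σ ^ 2 * (Real.log t - Real.log γ) + r ^ 2 / 2 := by
  have hexponent : (∑ i, Δ i * (z i - x i)) / σ ^ 2 - r ^ 2 / (2 * σ ^ 2)
      = (∑ i, Δ i * z i - ∑ i, Δ i * x i - r ^ 2 / 2) / σ ^ 2 := by
    simp only [mul_sub, Finset.sum_sub_distrib]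
    field_simp
  rw [← le_div_iff₀' hγ, ← Real.log_le_log_iff (Real.exp_pos _) (div_pos ht hγ), Real.log_exp,
    Real.log_div ht.ne' hγ.ne', hexponent, div_le_iff₀ (by positivity)]
  constructor <;> intro <;> linarith

lemma integral_indicator_discreteMeasure_prod {S E : Type*} [MeasurableSpace S]
    [MeasurableSpace E] (p : S → ℝ) (hp : ∀ z, 0 ≤ p z) (ν : Measure E) [IsFiniteMeasure ν]
    {A : Set (S × E)} (hA : MeasurableSet A) :
    ∫ q, A.indicator (fun _ => (1 : ℝ)) q ∂(discreteMeasure p).prod ν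
      = ∑' z, p z * (ν (Prod.mk z ⁻¹' A)).toReal := by
  rw [← Pi.one_def, integral_indicator_one hA, measureReal_def, Measure.prod_apply hA,
    discreteMeasure, lintegral_sum_measure]
  simp_rw [lintegral_smul_measure, lintegral_dirac' _ (measurable_measure_prodMk_left hA),
    smul_eq_mul]
  rw [ENNReal.tsum_toReal_eq fun z => ENNReal.mul_ne_top ENNReal.ofReal_ne_top (measure_ne_top _ _)]
  simp_rw [ENNReal.toReal_mul, ENNReal.toReal_ofReal (hp _)]

lemma integral_threshold_test {S ι : Type*} [Countable S] [MeasurableSpace S]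
    [MeasurableSingletonClass S] [Fintype ι] (p γ₁ : S → ℝ) (hp : ∀ z, 0 ≤ p z)
    (hγ₁ : ∀ z, 0 < p z → 0 < γ₁ z) {Δ : ι → ℝ} (hΔ : Δ ≠ 0) (x m : ι → ℝ) {σ t : ℝ}
    (hσ : 0 < σ) {v : ℝ≥0} (hv : (v : ℝ) = σ ^ 2) (ht : 0 < t) (r : ℝ) :
    ∫ q, {q : S × (ι → ℝ) |
        γ₁ q.1 * Real.exp ((∑ i, Δ i * (q.2 i - x i)) / σ ^ 2 - r ^ 2 / (2 * σ ^ 2)) ≤ t}.indicator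
          (fun _ => (1 : ℝ)) q
        ∂(discreteMeasure p).prod (Measure.pi fun i => gaussianReal (m i) v)
      = ∑' z, p z * stdNormalCDF
          ((∑ i, Δ i * x i + σ ^ 2 * (Real.log t - Real.log (γ₁ z)) + r ^ 2 / 2
            - ∑ i, Δ i * m i) / (√(∑ i, Δ i ^ 2) * σ)) := by
  have hmeas : MeasurableSet {q : S × (ι → ℝ) |
      γ₁ q.1 * Real.exp ((∑ i, Δ i * (q.2 i - x i)) / σ ^ 2 - r ^ 2 / (2 * σ ^ 2)) ≤ t} := by
    have : Measurable γ₁ := measurable_of_countable γ₁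
    exact measurableSet_le (by fun_prop) measurable_const
  rw [integral_indicator_discreteMeasure_prod p hp _ hmeas]
  refine tsum_congr fun z => ?_
  rcases (hp z).eq_or_lt with hz | hz
  · simp [← hz]
  have hsection : Prod.mk z ⁻¹' {q : S × (ι → ℝ) |
      γ₁ q.1 * Real.exp ((∑ i, Δ i * (q.2 i - x i)) / σ ^ 2 - r ^ 2 / (2 * σ ^ 2)) ≤ t}
      = {y | ∑ i, Δ i * y i
          ≤ ∑ i, Δ i * x i + σ ^ 2 * (Real.log t - Real.log (γ₁ z)) + r ^ 2 / 2} := by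
    ext y
    exact threshold_test_iff Δ x y r hσ.ne' (hγ₁ z hz) ht
  have hv_ne : v ≠ 0 := by
    rw [← NNReal.coe_ne_zero, hv]
    positivity
  rw [hsection, pi_gaussianReal_sum_mul_le_toReal m hΔ hv_ne, hv, Real.sqrt_sq hσ.le]

theorem hybrid_certificate_achievability_general
    {S : Type*} [Countable S] [MeasurableSpace S] [MeasurableSingletonClass S]
    (p₁ q₁ : S → ℝ)
    (hp₁nn : ∀ z, 0 ≤ p₁ z)
    (hq₁nn : ∀ z, 0 ≤ q₁ z)
    (hsupp : ∀ z, 0 < p₁ z ↔ 0 < q₁ z)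
    (γ₁ : S → ℝ) (hγ₁def : γ₁ = fun z => q₁ z / p₁ z)
    (D : ℕ) (σ : ℝ) (hσ : 0 < σ)
    (x₂ Δ : Fin D → ℝ)
    (r : ℝ) (hr : r = Real.sqrt (∑ i, Δ i ^ 2)) (hr0 : 0 < r)
    (w v : Measure (S × (Fin D → ℝ)))
    (hw : w = (discreteMeasure p₁).prod
      (Measure.pi (fun i => gaussianReal (x₂ i) ⟨σ ^ 2, sq_nonneg σ⟩)))
    (hv : v = (discreteMeasure q₁).prod
      (Measure.pi (fun i => gaussianReal (x₂ i + Δ i) ⟨σ ^ 2, sq_nonneg σ⟩)))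
    (pA : ℝ)
    (tstar : ℝ) (htstar : 0 < tstar)
    (hcapacity : ∑' z₁, p₁ z₁ *
      stdNormalCDF ((r ^ 2 / 2 + σ ^ 2 * (Real.log tstar - Real.log (γ₁ z₁))) / (σ * r))
        = pA)
    (hstar : S × (Fin D → ℝ) → ℝ)
    (hstar_def : hstar = Set.indicator
      {q : S × (Fin D → ℝ) |
        γ₁ q.1 * Real.exp ((∑ i, Δ i * (q.2 i - x₂ i)) / σ ^ 2 - r ^ 2 / (2 * σ ^ 2))
          ≤ tstar}
      (fun _ => (1 : ℝ))) :
    (∫ q, hstar q ∂w = pA) ∧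
      ∫ q, hstar q ∂v
        = ∑' z₁, q₁ z₁ *
            stdNormalCDF
              ((r ^ 2 / 2 + σ ^ 2 * (Real.log tstar - Real.log (γ₁ z₁))) / (σ * r)
                - r / σ) := by
  have hΔ : Δ ≠ 0 := by
    rintro rfl
    simp [hr] at hr0
  have hγ₁_pos : ∀ z, 0 < p₁ z → 0 < γ₁ z := fun z hz => by
    simpa [hγ₁def] using div_pos ((hsupp z).mp hz) hz
  have hshift : ∑ i, Δ i * (x₂ i + Δ i) = ∑ i, Δ i * x₂ i + r ^ 2 := by
    rw [hr, Real.sq_sqrt (by positivity), ← Finset.sum_add_distrib]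
    simp only [mul_add, sq]
  rw [hstar_def, hw, hv]
  -- not `rw`: the variance `⟨σ ^ 2, _⟩` elaborates to a `Subtype.mk`, which `rw`'s motive check
  -- rejects as ill-typed at instance transparency
  refine ⟨(integral_threshold_test p₁ γ₁ hp₁nn hγ₁_pos hΔ x₂ x₂ hσ rfl htstar r).trans ?_,
    (integral_threshold_test q₁ γ₁ hq₁nn (fun z hz => hγ₁_pos z ((hsupp z).mpr hz)) hΔ x₂ _ hσ
      rfl htstar r).trans ?_⟩
  all_goals rw [← hr]
  · rw [← hcapacity]
    refine tsum_congr fun z => congrArg _ (congrArg _ ?_)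
    field_simp
    ring
  · rw [hshift]
    refine tsum_congr fun z => congrArg _ (congrArg _ ?_)
    field_simp
    ring

/-- **Achievability part of the hybrid randomized smoothing certificate.**
With clean distribution `w = p₁ ⊗ N(x₂, σ²I_D)`, adversarial distribution
`v = q₁ ⊗ N(x₂+Δ, σ²I_D)`, joint likelihood ratio
`γ(z₁,z₂) = (q₁/p₁)(z₁)·exp(σ⁻²Δᵀ(z₂−x₂) − r²/(2σ²))`, and `t* > 0` solving the
capacity equation `Σ_{z₁} p₁(z₁)·Φ((r²/2 + σ²(log t* − log γ₁(z₁)))/(σr)) = p_A`, the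
threshold test `h* = 1{γ ≤ t*}` satisfies `∫ h* dw = p_A` and
`∫ h* dv = Σ_{z₁} q₁(z₁)·Φ((r²/2 + σ²(log t* − log γ₁(z₁)))/(σr) − r/σ)`. -/
theorem hybrid_certificate_achievability
    {S : Type*} [Countable S] [MeasurableSpace S] [MeasurableSingletonClass S]
    (p₁ q₁ : S → ℝ)
    (hp₁nn : ∀ z, 0 ≤ p₁ z) (hp₁sum : ∑' z, p₁ z = 1)
    (hq₁nn : ∀ z, 0 ≤ q₁ z) (hq₁sum : ∑' z, q₁ z = 1)
    (hsupp : ∀ z, 0 < p₁ z ↔ 0 < q₁ z)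
    (γ₁ : S → ℝ) (hγ₁def : γ₁ = fun z => q₁ z / p₁ z)
    (D : ℕ) (hD : 1 ≤ D) (σ : ℝ) (hσ : 0 < σ)
    (x₂ Δ : Fin D → ℝ)
    (r : ℝ) (hr : r = Real.sqrt (∑ i, Δ i ^ 2)) (hr0 : 0 < r)
    (w v : Measure (S × (Fin D → ℝ)))
    (hw : w = (discreteMeasure p₁).prod
      (Measure.pi (fun i => gaussianReal (x₂ i) ⟨σ ^ 2, sq_nonneg σ⟩)))
    (hv : v = (discreteMeasure q₁).prod
      (Measure.pi (fun i => gaussianReal (x₂ i + Δ i) ⟨σ ^ 2, sq_nonneg σ⟩)))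
    (pA : ℝ) (hpA : pA ∈ Set.Ioo (0 : ℝ) 1)
    (tstar : ℝ) (htstar : 0 < tstar)
    (hcapacity : ∑' z₁, p₁ z₁ *
      stdNormalCDF ((r ^ 2 / 2 + σ ^ 2 * (Real.log tstar - Real.log (γ₁ z₁))) / (σ * r))
        = pA)
    (hstar : S × (Fin D → ℝ) → ℝ)
    (hstar_def : hstar = Set.indicator
      {q : S × (Fin D → ℝ) |
        γ₁ q.1 * Real.exp ((∑ i, Δ i * (q.2 i - x₂ i)) / σ ^ 2 - r ^ 2 / (2 * σ ^ 2))
          ≤ tstar}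
      (fun _ => (1 : ℝ))) :
    (∫ q, hstar q ∂w = pA) ∧
      ∫ q, hstar q ∂v
        = ∑' z₁, q₁ z₁ *
            stdNormalCDF
              ((r ^ 2 / 2 + σ ^ 2 * (Real.log tstar - Real.log (γ₁ z₁))) / (σ * r)
                - r / σ) :=
  hybrid_certificate_achievability_general p₁ q₁ hp₁nn hq₁nn hsupp γ₁ hγ₁def D σ hσ x₂ Δ r hr hr0 w
    v hw hv pA tstar htstar hcapacity hstar hstar_def
end

section
/- Fix real numbers M > 1, r > 0, and c ∈ ℝ. Define the set S = {(i, z) ∈ {0,1} × ℝ : i·log M + r·z ≤ c}. Then S cannot be written as a product set: there exist no A ⊆ {0,1} and B ⊆ ℝ with S = A × B. Consequently, the Neyman–Pearson optimal acceptance region for a joint discrete–continuous likelihood ratio of the form γ(i,z) = Mⁱ·exp(r·z − r²/2) is not expressible as an intersection {γ₁(i) ≤ t₁} ∩ {γ₂(z) ≤ t₂} of unimodal threshold regions for any thresholds t₁, t₂. -/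
/-- **Non-composability of Neyman–Pearson rules (Proposition 4.1).**
For `M > 1`, `r > 0`, the half-space `S = {(i,z) ∈ {0,1}×ℝ : i·log M + r·z ≤ c}` is not a
product set `A × B`, and in particular is never an intersection
`{γ₁(i) ≤ t₁} ∩ {γ₂(z) ≤ t₂}` of unimodal threshold regions, where `γ₁(i) = Mⁱ`
and `γ₂(z) = exp(r·z − r²/2)`. -/
theorem np_halfspace_not_product
    (M r c : ℝ) (hM : 1 < M) (hr : 0 < r)
    (S : Set (Fin 2 × ℝ))
    (hS : S = {p : Fin 2 × ℝ | ((p.1 : ℕ) : ℝ) * Real.log M + r * p.2 ≤ c}) :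
    (¬ ∃ (A : Set (Fin 2)) (B : Set ℝ), S = A ×ˢ B) ∧
      ∀ t₁ t₂ : ℝ,
        S ≠ {p : Fin 2 × ℝ |
          M ^ ((p.1 : ℕ)) ≤ t₁ ∧ Real.exp (r * p.2 - r ^ 2 / 2) ≤ t₂} := by
  have hlog : 0 < Real.log M := Real.log_pos hM
  have hr' : r ≠ 0 := ne_of_gt hr
  have hprod : ¬ ∃ (A : Set (Fin 2)) (B : Set ℝ), S = A ×ˢ B := by
    rintro ⟨A, B, h⟩
    have h1 : ((1 : Fin 2), (c - Real.log M) / r) ∈ S := by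
      rw [hS]
      simp only [Set.mem_setOf_eq, Fin.val_one, Nat.cast_one, one_mul]
      rw [mul_div_cancel₀ _ hr']
      linarith
    have h0 : ((0 : Fin 2), c / r) ∈ S := by
      rw [hS]
      simp only [Set.mem_setOf_eq, Fin.val_zero, Nat.cast_zero, zero_mul, zero_add]
      rw [mul_div_cancel₀ _ hr']
    rw [h] at h1 h0
    have hbad : ((1 : Fin 2), c / r) ∈ A ×ˢ B := ⟨h1.1, h0.2⟩
    rw [← h, hS] at hbad
    simp only [Set.mem_setOf_eq, Fin.val_one, Nat.cast_one, one_mul] at hbad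
    rw [mul_div_cancel₀ _ hr'] at hbad
    linarith
  refine ⟨hprod, fun t₁ t₂ heq => hprod ?_⟩
  refine ⟨{i : Fin 2 | M ^ ((i : ℕ)) ≤ t₁}, {z : ℝ | Real.exp (r * z - r ^ 2 / 2) ≤ t₂}, ?_⟩
  rw [heq]
  ext p
  simp [Set.mem_prod]
end
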